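/- Let 𝒰 be a unitary system with a complete Riesz vector ψ. Then the set of complete Riesz vectors for 𝒰 equals {Aψ : A an invertible operator in C_ψ(𝒰)}. -/
import Mathlib


variable {H : Type*} [NormedAddCommGroup H] [InnerProductSpace ℂ H] [CompleteSpace H]

/-- A family `v` is a Riesz basis for `H` if it is the image of an orthonormal basis of `H`
under a bounded invertible operator; equivalently, some bounded invertible operator carries
`v` to an orthonormal basis. -/
def IsRieszBasis {ι : Type*} (v : ι → H) : Prop :=
  ∃ T : H ≃L[ℂ] H, Orthonormal ℂ (fun i => T (v i)) ∧
    (Submodule.span ℂ (Set.range fun i => T (v i))).topologicalClosure = ⊤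

/-- `ψ` is a complete Riesz vector for `𝒰`: `{Uψ : U ∈ 𝒰}` is a Riesz basis for `H`. -/
def IsCompleteRieszVector (𝒰 : Set (H →L[ℂ] H)) (ψ : H) : Prop :=
  IsRieszBasis (fun U : 𝒰 => (U : H →L[ℂ] H) ψ)

/-- The local commutant of `𝒰` at `ψ`. -/
def localCommutant (𝒰 : Set (H →L[ℂ] H)) (ψ : H) : Set (H →L[ℂ] H) :=
  {A : H →L[ℂ] H | ∀ U ∈ 𝒰, (A * U - U * A) ψ = 0}

/-- For a unitary system `𝒰` with complete Riesz vector `ψ`, the complete Riesz vectors for `𝒰`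
are exactly the vectors `Aψ` with `A` an operator in the local commutant `C_ψ(𝒰)` that is
invertible in `B(H)`. -/
theorem stmt_5 (𝒰 : Set (H →L[ℂ] H)) (h1 : (1 : H →L[ℂ] H) ∈ 𝒰)
    (hunit : ∀ W ∈ 𝒰, W ∈ unitary (H →L[ℂ] H))
    (ψ : H) (hψ : IsCompleteRieszVector 𝒰 ψ) :
    {η : H | IsCompleteRieszVector 𝒰 η} =
      {η : H | ∃ A : H →L[ℂ] H, A ∈ localCommutant 𝒰 ψ ∧ IsUnit A ∧ A ψ = η} := by
  classical
  ext η
  simp only [Set.mem_setOf_eq]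
  constructor
  · rintro ⟨T', hon', hsp'⟩
    obtain ⟨T, hon, hsp⟩ := hψ
    let b : HilbertBasis 𝒰 ℂ H := HilbertBasis.mk hon (le_of_eq hsp.symm)
    let b' : HilbertBasis 𝒰 ℂ H := HilbertBasis.mk hon' (le_of_eq hsp'.symm)
    let V : H ≃ₗᵢ[ℂ] H := b.repr.trans b'.repr.symm
    let E : H ≃L[ℂ] H := T.trans ((V.toContinuousLinearEquiv).trans T'.symm)
    have hb : ∀ U : 𝒰, b U = T ((U : H →L[ℂ] H) ψ) := fun U =>
      congrFun (HilbertBasis.coe_mk hon _) U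
    have hb' : ∀ U : 𝒰, b' U = T' ((U : H →L[ℂ] H) η) := fun U =>
      congrFun (HilbertBasis.coe_mk hon' _) U
    have hV : ∀ U : 𝒰, V (b U) = b' U := by
      intro U
      simp only [V, LinearIsometryEquiv.trans_apply]
      rw [b.repr_self, ← b'.repr_self, LinearIsometryEquiv.symm_apply_apply]
    have hE : ∀ U : 𝒰, E ((U : H →L[ℂ] H) ψ) = (U : H →L[ℂ] H) η := by
      intro U
      simp only [E, ContinuousLinearEquiv.trans_apply,
        LinearIsometryEquiv.coe_toContinuousLinearEquiv]
      rw [← hb U, hV U, hb' U, ContinuousLinearEquiv.symm_apply_apply]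
    have hEψ : E ψ = η := by
      have := hE ⟨(1 : H →L[ℂ] H), h1⟩
      simpa using this
    refine ⟨(E : H →L[ℂ] H), ?_, ?_, hEψ⟩
    · intro U hU
      have h2 := hE ⟨U, hU⟩
      simp only [ContinuousLinearMap.sub_apply, ContinuousLinearMap.mul_apply,
        ContinuousLinearEquiv.coe_coe, sub_eq_zero]
      rw [h2, hEψ]
    · refine ⟨⟨(E : H →L[ℂ] H), (E.symm : H →L[ℂ] H), ?_, ?_⟩, rfl⟩ <;>
        ext x <;> simp [ContinuousLinearMap.mul_apply]
  · rintro ⟨A, hA, hAunit, rfl⟩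
    obtain ⟨T, hon, hsp⟩ := hψ
    obtain ⟨u, hu⟩ := hAunit
    let EA : H ≃L[ℂ] H := ContinuousLinearEquiv.ofUnit u
    have hcomm : ∀ U : 𝒰, (U : H →L[ℂ] H) (A ψ) = A ((U : H →L[ℂ] H) ψ) := by
      rintro ⟨U, hU⟩
      have := hA U hU
      simp only [ContinuousLinearMap.sub_apply, ContinuousLinearMap.mul_apply,
        sub_eq_zero] at this
      exact this.symm
    have key : (fun U : 𝒰 => ((EA.symm.trans T)) ((U : H →L[ℂ] H) (A ψ)))
        = fun U : 𝒰 => T ((U : H →L[ℂ] H) ψ) := by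
      funext U
      have hEA : ∀ x, EA x = A x := fun x => by rw [← hu]; rfl
      rw [ContinuousLinearEquiv.trans_apply, hcomm U, ← hEA,
        ContinuousLinearEquiv.symm_apply_apply]
    exact ⟨EA.symm.trans T, by rw [key]; exact hon, by rw [key]; exact hsp⟩
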